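/- arXiv:2104.02280 — 3 statements merged into one kernel-verified Lean document; each statement's English description precedes it below -/
import Mathlib

section
/- Let n ≥ 5 and let A be the n×n clamped-free beam matrix. Define B ∈ ℝ^{n×n} (1-based indexing) by: b_{i,j} = (3ij² + j − j³)/6 for all 1 ≤ j ≤ i ≤ n with j ≤ n−1; b_{n,n} = n(2n²+1)/12; b_{i,n} = (1/2)·b_{n,i} = (3ni² + i − i³)/12 for 1 ≤ i ≤ n−1; and b_{i,j} = b_{j,i} for 1 ≤ i < j ≤ n−1. Then B·A = 1 and A·B = 1, i.e., B is the inverse of A. -/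
open scoped ENNReal

/-- The `n × n` clamped-free beam matrix (1-based index `i' = i+1`). -/
def A_CF (n : ℕ) : Matrix (Fin n) (Fin n) ℝ :=
  Matrix.of fun i j =>
    let i' := (i : ℕ) + 1
    let j' := (j : ℕ) + 1
    if i' = j' then (if i' = 1 then 7 else if i' = n - 1 then 5 else if i' = n then 2 else 6)
    else if j' = i' + 1 then (if i' = n - 1 then -2 else -4)
    else if i' = j' + 1 then -4
    else if j' = i' + 2 then 1
    else if i' = j' + 2 then (if i' = n then 2 else 1)
    else 0

/-- The claimed inverse `B` of the clamped-free beam matrix. -/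
noncomputable def Bmat (n : ℕ) : Matrix (Fin n) (Fin n) ℝ :=
  Matrix.of fun i j =>
    let x : ℝ := (i : ℕ) + 1
    let y : ℝ := (j : ℕ) + 1
    if (j : ℕ) ≤ (i : ℕ) then
      (if (i : ℕ) + 1 = n ∧ (j : ℕ) + 1 = n then (n : ℝ) * (2 * (n : ℝ) ^ 2 + 1) / 12
       else (3 * x * y ^ 2 + y - y ^ 3) / 6)
    else
      (if (j : ℕ) + 1 = n then (3 * (n : ℝ) * x ^ 2 + x - x ^ 3) / 12
       else (3 * y * x ^ 2 + x - x ^ 3) / 6)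

/-!
Column `y` of `B` is, up to a factor `1/2` in the last column, the discrete Green's function
`green y x = (3 y x² + x - x³) / 6 + ((x - y)³ - (x - y)) / 6 · [x ≥ y]` at the 1-based positions
`x = 1, …, n`. Its second difference in `x` is the ramp `(y - x)₊`, whose second difference is the
Kronecker delta, so `Δ⁴ (green y) = δ_y`. Rows `1, …, n - 2` of `A` act as `Δ⁴` on any `f` with the
clamped ghost values `f 0 = 0`, `f (-1) = f 1`, which `green y` has. The last two rows act as
`Δ⁴ f (n-1) - Δ² f n` and `2 Δ² f (n-1)`; the ramp terms vanish there except in row and column `n`,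
where the factor `1/2` cancels the `2`. Hence `A B = 1`, and `B A = 1` since the matrices are square.
-/

def secondDiff (f : ℤ → ℝ) (x : ℤ) : ℝ := f (x - 1) - 2 * f x + f (x + 1)

lemma secondDiff_secondDiff_apply (f : ℤ → ℝ) (x : ℤ) :
    secondDiff (secondDiff f) x
      = f (x - 2) - 4 * f (x - 1) + 6 * f x - 4 * f (x + 1) + f (x + 2) := by
  simp only [secondDiff]
  ring_nf

lemma secondDiff_ramp (y x : ℤ) :
    secondDiff (fun x ↦ ((max (y - x) 0 : ℤ) : ℝ)) x = if x = y then 1 else 0 := by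
  dsimp only [secondDiff]
  rcases lt_trichotomy x y with h | rfl | h
  · rw [if_neg h.ne, max_eq_left (by omega), max_eq_left (by omega), max_eq_left (by omega)]
    push_cast
    ring
  · simp
  · rw [if_neg h.ne', max_eq_right (by omega), max_eq_right (by omega), max_eq_right (by omega)]
    simp

noncomputable def truncCubic (t : ℤ) : ℝ := if 0 ≤ t then ((t : ℝ) ^ 3 - t) / 6 else 0

lemma truncCubic_of_nonpos {t : ℤ} (ht : t ≤ 0) : truncCubic t = 0 := by
  unfold truncCubic
  split_ifs with h
  · obtain rfl : t = 0 := le_antisymm ht h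
    norm_num
  · rfl

lemma truncCubic_of_neg_one_le {t : ℤ} (ht : -1 ≤ t) : truncCubic t = ((t : ℝ) ^ 3 - t) / 6 := by
  unfold truncCubic
  split_ifs with h
  · rfl
  · obtain rfl : t = -1 := by omega
    norm_num

noncomputable def green (y x : ℤ) : ℝ := (3 * y * x ^ 2 + x - x ^ 3) / 6 + truncCubic (x - y)

lemma secondDiff_green (y x : ℤ) : secondDiff (green y) x = max (y - x) 0 := by
  unfold secondDiff green
  rcases lt_or_ge x y with h | h
  · rw [truncCubic_of_nonpos (by omega), truncCubic_of_nonpos (by omega),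
      truncCubic_of_nonpos (by omega), max_eq_left (by omega)]
    push_cast
    ring
  · rw [truncCubic_of_neg_one_le (by omega), truncCubic_of_neg_one_le (by omega),
      truncCubic_of_neg_one_le (by omega), max_eq_right (by omega)]
    push_cast
    ring

lemma secondDiff_secondDiff_green (y x : ℤ) :
    secondDiff (secondDiff (green y)) x = if x = y then 1 else 0 := by
  rw [show secondDiff (green y) = fun x ↦ ((max (y - x) 0 : ℤ) : ℝ) from
    funext (secondDiff_green y), secondDiff_ramp]

lemma green_zero {y : ℤ} (hy : 0 ≤ y) : green y 0 = 0 := by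
  rw [green, zero_sub, truncCubic_of_nonpos (by omega)]
  simp

lemma green_neg_one {y : ℤ} (hy : 1 ≤ y) : green y (-1) = green y 1 := by
  simp only [green, truncCubic_of_nonpos (show -1 - y ≤ 0 by omega),
    truncCubic_of_nonpos (show 1 - y ≤ 0 by omega)]
  ring

lemma Bmat_apply {n : ℕ} (i j : Fin n) :
    Bmat n i j = green ((j : ℕ) + 1) ((i : ℕ) + 1) / if (j : ℕ) + 1 = n then 2 else 1 := by
  have hi := i.isLt
  simp only [Bmat, Matrix.of_apply, green]
  by_cases hj : (j : ℕ) + 1 = n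
  · have hn : (n : ℝ) = (j : ℕ) + 1 := by exact_mod_cast hj.symm
    rw [if_pos hj, if_pos hj, truncCubic_of_nonpos (by omega), hn]
    split_ifs with hji hij
    · have : (i : ℕ) = j := by omega
      rw [this]
      push_cast
      ring
    · omega
    · push_cast
      ring
  · rw [if_neg hj, if_neg hj, div_one]
    split_ifs with hji hij
    · omega
    · rw [truncCubic_of_neg_one_le (by omega)]
      push_cast
      ring
    · rw [truncCubic_of_nonpos (by omega)]
      push_cast
      ring

lemma Fin.sum_univ_eq_sum_range_of_support {M : Type*} [AddCommMonoid M] {n : ℕ} (c : Fin n → M)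
    {a l : ℕ} (hl : a + l ≤ n) (hc : ∀ k : Fin n, c k ≠ 0 → a ≤ k ∧ (k : ℕ) < a + l) :
    ∑ k, c k = ∑ t ∈ Finset.range l, if h : a + t < n then c ⟨a + t, h⟩ else 0 := by
  rw [Finset.sum_fin_eq_sum_range, ← Nat.add_sub_cancel_left (n := a) (m := l),
    ← Finset.sum_Ico_eq_sum_range (fun k ↦ if h : k < n then c ⟨k, h⟩ else 0)]
  symm
  apply Finset.sum_subset
  · intro k hk
    rw [Finset.mem_Ico] at hk
    rw [Finset.mem_range]
    omega
  · intro k _ hk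
    split_ifs with h
    · by_contra hne
      exact hk (Finset.mem_Ico.2 (hc _ hne))
    · rfl

lemma A_CF_apply_eq_zero {n : ℕ} {i k : Fin n} (h : (k : ℕ) + 2 < i ∨ (i : ℕ) + 2 < k) :
    A_CF n i k = 0 := by
  simp only [A_CF, Matrix.of_apply]
  split_ifs <;> first | rfl | omega

lemma sum_A_CF_mul_eq_sum_range {n : ℕ} (i : Fin n) (c : Fin n → ℝ) {a l : ℕ}
    (ha : a ≤ (i : ℕ) - 2) (hl : min ((i : ℕ) + 3) n ≤ a + l) (hln : a + l ≤ n) :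
    ∑ k, A_CF n i k * c k
      = ∑ t ∈ Finset.range l, if h : a + t < n then A_CF n i ⟨a + t, h⟩ * c ⟨a + t, h⟩ else 0 := by
  apply Fin.sum_univ_eq_sum_range_of_support _ hln
  intro k hk
  by_contra hout
  exact hk (by rw [A_CF_apply_eq_zero (by omega), zero_mul])

lemma sum_A_CF_mul_of_add_three_le {n : ℕ} (i : Fin n) (hi : (i : ℕ) + 3 ≤ n) {f : ℤ → ℝ}
    (h0 : f 0 = 0) (h1 : f (-1) = f 1) :
    ∑ k, A_CF n i k * f ((k : ℕ) + 1) = secondDiff (secondDiff f) ((i : ℕ) + 1) := by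
  obtain hi0 | hi1 | ⟨m, hm⟩ : (i : ℕ) = 0 ∨ (i : ℕ) = 1 ∨ ∃ m, (i : ℕ) = m + 2 := by
    rcases i with ⟨_ | _ | m, _⟩ <;> simp
  · rw [sum_A_CF_mul_eq_sum_range i _ (a := 0) (l := 3) (by omega) (by omega) (by omega)]
    simp (disch := omega) only [Finset.sum_range_succ, Finset.sum_range_zero, dif_pos, A_CF,
      Matrix.of_apply, hi0, if_pos, if_neg]
    rw [secondDiff_secondDiff_apply]
    norm_num [h0, h1]
    ring
  · rw [sum_A_CF_mul_eq_sum_range i _ (a := 0) (l := 4) (by omega) (by omega) (by omega)]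
    simp (disch := omega) only [Finset.sum_range_succ, Finset.sum_range_zero, dif_pos, A_CF,
      Matrix.of_apply, hi1, if_pos, if_neg]
    rw [secondDiff_secondDiff_apply]
    norm_num [h0]
    ring
  · rw [sum_A_CF_mul_eq_sum_range i _ (a := m) (l := 5) (by omega) (by omega) (by omega)]
    simp (disch := omega) only [Finset.sum_range_succ, Finset.sum_range_zero, dif_pos, A_CF,
      Matrix.of_apply, hm, if_neg]
    rw [secondDiff_secondDiff_apply]
    push_cast
    ring_nf

lemma sum_A_CF_mul_of_add_two_eq {n : ℕ} (i : Fin n) (hn : 4 ≤ n) (hi : (i : ℕ) + 2 = n)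
    (f : ℤ → ℝ) :
    ∑ k, A_CF n i k * f ((k : ℕ) + 1)
      = secondDiff (secondDiff f) ((i : ℕ) + 1) - secondDiff f ((i : ℕ) + 2) := by
  obtain ⟨m, hm⟩ : ∃ m, (i : ℕ) = m + 2 := ⟨i - 2, by omega⟩
  rw [sum_A_CF_mul_eq_sum_range i _ (a := m) (l := 4) (by omega) (by omega) (by omega)]
  simp (disch := omega) only [Finset.sum_range_succ, Finset.sum_range_zero, dif_pos, A_CF,
    Matrix.of_apply, hm, if_pos, if_neg]
  rw [secondDiff_secondDiff_apply, secondDiff]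
  push_cast
  ring_nf

lemma sum_A_CF_mul_of_add_one_eq {n : ℕ} (i : Fin n) (hn : 3 ≤ n) (hi : (i : ℕ) + 1 = n)
    (f : ℤ → ℝ) :
    ∑ k, A_CF n i k * f ((k : ℕ) + 1) = 2 * secondDiff f (i : ℕ) := by
  obtain ⟨m, hm⟩ : ∃ m, (i : ℕ) = m + 2 := ⟨i - 2, by omega⟩
  rw [sum_A_CF_mul_eq_sum_range i _ (a := m) (l := 3) (by omega) (by omega) (by omega)]
  simp (disch := omega) only [Finset.sum_range_succ, Finset.sum_range_zero, dif_pos, A_CF,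
    Matrix.of_apply, hm, if_pos, if_neg]
  rw [secondDiff]
  push_cast
  ring_nf

/-- `B` is the two-sided inverse of the clamped-free beam matrix `A`. -/
theorem Bmat_is_inverse_of_A_CF (n : ℕ) (hn : 5 ≤ n) :
    Bmat n * A_CF n = 1 ∧ A_CF n * Bmat n = 1 := by
  have hAB : A_CF n * Bmat n = 1 := by
    ext i j
    have hj := j.isLt
    rw [Matrix.mul_apply, Matrix.one_apply]
    simp_rw [Bmat_apply, mul_div_assoc', ← Finset.sum_div]
    obtain hi | hi | hi : (i : ℕ) + 3 ≤ n ∨ (i : ℕ) + 2 = n ∨ (i : ℕ) + 1 = n := by omega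
    · rw [sum_A_CF_mul_of_add_three_le i hi (green_zero (by omega)) (green_neg_one (by omega)),
        secondDiff_secondDiff_green]
      rcases eq_or_ne i j with rfl | hij
      · simp [show (i : ℕ) + 1 ≠ n by omega]
      · simp [hij, Fin.val_inj]
    · rw [sum_A_CF_mul_of_add_two_eq i (by omega) hi, secondDiff_secondDiff_green, secondDiff_green,
        max_eq_right (by omega)]
      rcases eq_or_ne i j with rfl | hij
      · simp [show (i : ℕ) + 1 ≠ n by omega]
      · simp [hij, Fin.val_inj]
    · rw [sum_A_CF_mul_of_add_one_eq i (by omega) hi, secondDiff_green]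
      rcases eq_or_ne i j with rfl | hij
      · simp [hi]
      · rw [max_eq_right (by omega)]
        simp [hij]
  exact ⟨mul_eq_one_comm.mp hAB, hAB⟩
end

section
/- Let n ≥ 5 and let A be the n×n clamped-free beam matrix. Then the spectral norm of the inverse satisfies ‖A⁻¹‖₂ ≤ (1/8)·√(n⁸ − n⁴), and in particular ‖A⁻¹‖₂ ≤ n⁴/8. -/
open scoped ENNReal

/-- The operator norm of an `n × n` real matrix induced by the vector `p`-norm
on `ℝⁿ` (realized as `PiLp`/`WithLp`). -/
noncomputable def opNormP (n : ℕ) (p : ℝ≥0∞) [Fact (1 ≤ p)]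
    (B : Matrix (Fin n) (Fin n) ℝ) : ℝ :=
  ‖LinearMap.toContinuousLinearMap
    ((WithLp.linearEquiv p ℝ (Fin n → ℝ)).symm.toLinearMap ∘ₗ
      Matrix.toLin' B ∘ₗ (WithLp.linearEquiv p ℝ (Fin n → ℝ)).toLinearMap)‖

/-!
`A_CF n = diag(1, …, 1, 2) · S` with `S` symmetric, and `S⁻¹` is the discrete Green's function
of the beam, `K i j = a (3 a b - a² + 1) / 6` with `a = min i j`, `b = max i j`: each column of `K`
is a cubic up to the diagonal and linear beyond it, so it solves the fourth-difference equation
with a unit source on the diagonal, and it meets the clamped condition at the first row and the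
free-end conditions at the last two. Hence `(A_CF n)⁻¹ = K · diag(1, …, 1, 1/2)`. The spectral norm
is at most the Frobenius norm, and `∑ K i j ²` is an explicit polynomial of degree 8 with leading
term `11 n⁸ / 1680`, which stays below `(n⁸ - n⁴) / 64` once `n ≥ 5`.
-/

open Finset Matrix

lemma opNormP_two_le_sqrt_sum_sq {n : ℕ} (B : Matrix (Fin n) (Fin n) ℝ) :
    opNormP n 2 B ≤ √(∑ i, ∑ j, B i j ^ 2) := by
  refine ContinuousLinearMap.opNorm_le_bound _ (Real.sqrt_nonneg _) fun x => ?_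
  change ‖(WithLp.toLp 2 (B *ᵥ WithLp.ofLp x) : EuclideanSpace ℝ (Fin n))‖ ≤ _
  rw [EuclideanSpace.norm_eq, EuclideanSpace.norm_eq, ← Real.sqrt_mul (by positivity)]
  gcongr
  simp only [Real.norm_eq_abs, sq_abs]
  rw [sum_mul]
  exact sum_le_sum fun i _ => sum_mul_sq_le_sq_mul_sq univ (B i) (WithLp.ofLp x)

lemma Finset.sum_range_eq_sum_window {M : Type*} [AddCommMonoid M] {n a w : ℕ} (f : ℕ → M)
    (haw : a + w ≤ n) (hf : ∀ j < n, j < a ∨ a + w ≤ j → f j = 0) :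
    ∑ j ∈ range n, f j = ∑ d ∈ range w, f (a + d) := by
  rw [← add_tsub_cancel_left a w, ← sum_Ico_eq_sum_range]
  refine (sum_subset (fun j hj => ?_) fun j hj hj' => hf j ?_ ?_).symm
  · simp only [mem_Ico, mem_range] at *; omega
  · simpa using hj
  · simp only [mem_Ico, mem_range] at *; omega

def beamEntry (n i j : ℕ) : ℝ :=
  if i = j then (if i = 1 then 7 else if i = n - 1 then 5 else if i = n then 2 else 6)
  else if j = i + 1 then (if i = n - 1 then -2 else -4)
  else if i = j + 1 then -4
  else if j = i + 2 then 1
  else if i = j + 2 then (if i = n then 2 else 1)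
  else 0

lemma A_CF_apply (n : ℕ) (i j : Fin n) : A_CF n i j = beamEntry n (i + 1) (j + 1) := rfl

lemma beamEntry_eq_zero {n i j : ℕ} (h : j + 3 ≤ i ∨ i + 3 ≤ j) : beamEntry n i j = 0 := by
  simp (disch := omega) only [beamEntry, if_neg]

noncomputable def greenCubic (a b : ℕ) : ℝ := (3 * (a : ℝ) ^ 2 * b - (a : ℝ) ^ 3 + a) / 6

noncomputable def greenKernel (i j : ℕ) : ℝ := greenCubic (min i j) (max i j)

lemma greenKernel_of_le {i j : ℕ} (h : i ≤ j) : greenKernel i j = greenCubic i j := by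
  rw [greenKernel, min_eq_left h, max_eq_right h]

lemma greenKernel_of_ge {i j : ℕ} (h : j ≤ i) : greenKernel i j = greenCubic j i := by
  rw [greenKernel, min_eq_right h, max_eq_left h]

lemma greenKernel_zero_left (k : ℕ) : greenKernel 0 k = 0 := by
  simp [greenKernel, greenCubic]

lemma greenKernel_row_first (k : ℕ) :
    7 * greenKernel 1 k - 4 * greenKernel 2 k + greenKernel 3 k = if 1 = k then 1 else 0 := by
  rcases (by omega : k = 0 ∨ k = 1 ∨ k = 2 ∨ 3 ≤ k) with rfl | rfl | rfl | h <;>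
  simp (disch := omega) only [greenKernel_of_le, greenKernel_of_ge, if_neg] <;>
  (simp only [greenCubic]; push_cast; ring)

lemma greenKernel_row_interior (j k : ℕ) :
    greenKernel j k - 4 * greenKernel (j + 1) k + 6 * greenKernel (j + 2) k
      - 4 * greenKernel (j + 3) k + greenKernel (j + 4) k = if j + 2 = k then 1 else 0 := by
  rcases (by omega : k ≤ j ∨ k = j + 1 ∨ k = j + 2 ∨ k = j + 3 ∨ j + 4 ≤ k)
    with h | rfl | rfl | rfl | h <;>
  simp (disch := omega) only [greenKernel_of_le, greenKernel_of_ge, if_neg] <;>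
  (simp only [greenCubic]; push_cast; ring)

lemma greenKernel_row_penultimate {m k : ℕ} (hk : k ≤ m + 3) :
    greenKernel m k - 4 * greenKernel (m + 1) k + 5 * greenKernel (m + 2) k
      - 2 * greenKernel (m + 3) k = if m + 2 = k then 1 else 0 := by
  rcases (by omega : k ≤ m ∨ k = m + 1 ∨ k = m + 2 ∨ k = m + 3) with h | rfl | rfl | rfl <;>
  simp (disch := omega) only [greenKernel_of_le, greenKernel_of_ge, if_neg] <;>
  (simp only [greenCubic]; push_cast; ring)

lemma greenKernel_row_last {m k : ℕ} (hk : k ≤ m + 2) :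
    greenKernel m k - 2 * greenKernel (m + 1) k + greenKernel (m + 2) k
      = if m + 2 = k then 1 else 0 := by
  rcases (by omega : k ≤ m ∨ k = m + 1 ∨ k = m + 2) with h | rfl | rfl <;>
  simp (disch := omega) only [greenKernel_of_le, greenKernel_of_ge, if_neg] <;>
  (simp only [greenCubic]; push_cast; ring)

lemma beamEntry_mul_greenKernel_sum {m i k : ℕ} (hi₀ : 1 ≤ i) (hi : i ≤ m + 5) (hk : k ≤ m + 5) :
    ∑ j ∈ range (m + 5), beamEntry (m + 5) i (j + 1) * greenKernel (j + 1) k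
      = (if i = m + 5 then 2 else 1) * if i = k then 1 else 0 := by
  have window : ∀ a ≤ m, a = 0 ∨ a + 3 ≤ i → a = m ∨ i ≤ a + 3 →
      ∑ j ∈ range (m + 5), beamEntry (m + 5) i (j + 1) * greenKernel (j + 1) k
        = beamEntry (m + 5) i (a + 1) * greenKernel (a + 1) k
          + beamEntry (m + 5) i (a + 2) * greenKernel (a + 2) k
          + beamEntry (m + 5) i (a + 3) * greenKernel (a + 3) k
          + beamEntry (m + 5) i (a + 4) * greenKernel (a + 4) k
          + beamEntry (m + 5) i (a + 5) * greenKernel (a + 5) k := fun a ha h₁ h₂ => by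
    rw [sum_range_eq_sum_window (a := a) (w := 5) _ (by omega) fun j _ hj => by
      rw [beamEntry_eq_zero (by omega), zero_mul]]
    simp only [sum_range_succ, sum_range_zero, zero_add, add_assoc]
  rcases (by omega : i = 1 ∨ i = 2 ∨ (3 ≤ i ∧ i ≤ m + 3) ∨ i = m + 4 ∨ i = m + 5) with
    rfl | rfl | ⟨hi3, hi⟩ | rfl | rfl
  · rw [window 0 (by omega) (by omega) (by omega)]
    simp (disch := omega) only [beamEntry, if_neg, ↓reduceIte]
    linear_combination greenKernel_row_first k
  · rw [window 0 (by omega) (by omega) (by omega)]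
    simp (disch := omega) only [beamEntry, if_neg, ↓reduceIte]
    linear_combination greenKernel_row_interior 0 k - greenKernel_zero_left k
  · obtain ⟨t, rfl⟩ : ∃ t, i = t + 3 := ⟨i - 3, by omega⟩
    rw [window t (by omega) (by omega) (by omega)]
    simp (disch := omega) only [beamEntry, if_neg, ↓reduceIte]
    linear_combination greenKernel_row_interior (t + 1) k
  · rw [window m le_rfl (by omega) (by omega)]
    simp (disch := omega) only [beamEntry, if_pos, if_neg, ↓reduceIte]
    linear_combination greenKernel_row_penultimate (m := m + 2) (k := k) (by omega)
  · rw [window m le_rfl (by omega) (by omega)]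
    simp (disch := omega) only [beamEntry, if_neg, ↓reduceIte]
    have h := greenKernel_row_last (m := m + 3) hk
    simp only [add_assoc, Nat.reduceAdd] at h
    linear_combination 2 * h

noncomputable def greenMatrix (n : ℕ) : Matrix (Fin n) (Fin n) ℝ :=
  Matrix.of fun i j => greenKernel (i + 1) (j + 1)

lemma A_CF_mul_greenMatrix {n : ℕ} (hn : 5 ≤ n) :
    A_CF n * greenMatrix n = Matrix.diagonal fun i : Fin n => if (i : ℕ) + 1 = n then 2 else 1 := by
  obtain ⟨m, rfl⟩ : ∃ m, n = m + 5 := ⟨n - 5, by omega⟩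
  ext i k
  rw [Matrix.mul_apply, Matrix.diagonal_apply]
  simp only [A_CF_apply, greenMatrix, Matrix.of_apply]
  rw [Fin.sum_univ_eq_sum_range
      (fun j => beamEntry (m + 5) (i + 1) (j + 1) * greenKernel (j + 1) (k + 1)),
    beamEntry_mul_greenKernel_sum (by omega) (by omega) (by omega)]
  simp [Fin.ext_iff]

lemma A_CF_inv_eq {n : ℕ} (hn : 5 ≤ n) :
    (A_CF n)⁻¹ = greenMatrix n * diagonal fun i : Fin n => if (i : ℕ) + 1 = n then 2⁻¹ else 1 := by
  refine inv_eq_right_inv ?_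
  rw [← Matrix.mul_assoc, A_CF_mul_greenMatrix hn, diagonal_mul_diagonal, ← diagonal_one]
  congr 1
  ext i
  split_ifs <;> norm_num

lemma sum_range_add_one_pow_two (n : ℕ) :
    ∑ i ∈ range n, ((i : ℝ) + 1) ^ 2 = (n : ℝ) * (n + 1) * (2 * n + 1) / 6 := by
  induction n with
  | zero => simp
  | succ n ih => rw [sum_range_succ, ih]; push_cast; ring

lemma sum_range_add_one_pow_three (n : ℕ) :
    ∑ i ∈ range n, ((i : ℝ) + 1) ^ 3 = (n : ℝ) ^ 2 * (n + 1) ^ 2 / 4 := by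
  induction n with
  | zero => simp
  | succ n ih => rw [sum_range_succ, ih]; push_cast; ring

lemma sum_range_add_one_pow_four (n : ℕ) :
    ∑ i ∈ range n, ((i : ℝ) + 1) ^ 4
      = (n : ℝ) * (n + 1) * (2 * n + 1) * (3 * n ^ 2 + 3 * n - 1) / 30 := by
  induction n with
  | zero => simp
  | succ n ih => rw [sum_range_succ, ih]; push_cast; ring

lemma sum_range_add_one_pow_five (n : ℕ) :
    ∑ i ∈ range n, ((i : ℝ) + 1) ^ 5
      = (n : ℝ) ^ 2 * (n + 1) ^ 2 * (2 * n ^ 2 + 2 * n - 1) / 12 := by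
  induction n with
  | zero => simp
  | succ n ih => rw [sum_range_succ, ih]; push_cast; ring

lemma sum_range_add_one_pow_six (n : ℕ) :
    ∑ i ∈ range n, ((i : ℝ) + 1) ^ 6
      = (n : ℝ) * (n + 1) * (2 * n + 1) * (3 * n ^ 4 + 6 * n ^ 3 - 3 * n + 1) / 42 := by
  induction n with
  | zero => simp
  | succ n ih => rw [sum_range_succ, ih]; push_cast; ring

lemma sum_range_greenCubic_sq (n : ℕ) :
    ∑ i ∈ range n, greenCubic (i + 1) (n + 1) ^ 2
      = (66 * (n : ℝ) ^ 7 + 322 * n ^ 6 + 693 * n ^ 5 + 805 * n ^ 4 + 504 * n ^ 3 + 133 * n ^ 2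
          - 3 * n) / 2520 := by
  have h : ∀ i ∈ range n, greenCubic (i + 1) (n + 1) ^ 2
      = (9 * ((n : ℝ) + 1) ^ 2 - 2) / 36 * ((i : ℝ) + 1) ^ 4 - ((n : ℝ) + 1) / 6 * ((i : ℝ) + 1) ^ 5
        + 1 / 36 * ((i : ℝ) + 1) ^ 6 + ((n : ℝ) + 1) / 6 * ((i : ℝ) + 1) ^ 3
        + 1 / 36 * ((i : ℝ) + 1) ^ 2 := fun i _ => by
    simp only [greenCubic]; push_cast; ring
  rw [sum_congr rfl h]
  simp only [sum_add_distrib, sum_sub_distrib, ← mul_sum]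
  rw [sum_range_add_one_pow_two, sum_range_add_one_pow_three, sum_range_add_one_pow_four,
    sum_range_add_one_pow_five, sum_range_add_one_pow_six]
  ring

lemma sum_range_sum_range_greenKernel_sq (n : ℕ) :
    ∑ i ∈ range n, ∑ k ∈ range n, greenKernel (i + 1) (k + 1) ^ 2
      = (11 * (n : ℝ) ^ 8 + 44 * n ^ 7 + 84 * n ^ 6 + 98 * n ^ 5 + 84 * n ^ 4 + 56 * n ^ 3
          + 31 * n ^ 2 + 12 * n) / 1680 := by
  induction n with
  | zero => simp
  | succ n ih =>
    have hcol : ∀ i ∈ range n, greenKernel (i + 1) (n + 1) ^ 2 = greenCubic (i + 1) (n + 1) ^ 2 :=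
      fun i hi => by rw [greenKernel_of_le (by simp at hi; omega)]
    have hrow : ∀ k ∈ range n, greenKernel (n + 1) (k + 1) ^ 2 = greenCubic (k + 1) (n + 1) ^ 2 :=
      fun k hk => by rw [greenKernel_of_ge (by simp at hk; omega)]
    simp only [sum_range_succ, sum_add_distrib]
    rw [ih, sum_congr rfl hcol, sum_congr rfl hrow, sum_range_greenCubic_sq,
      greenKernel_of_le le_rfl]
    simp only [greenCubic]; push_cast; ring

lemma sum_sq_A_CF_inv_le {n : ℕ} (hn : 5 ≤ n) :
    ∑ i, ∑ j, (A_CF n)⁻¹ i j ^ 2 ≤ ((n : ℝ) ^ 8 - (n : ℝ) ^ 4) / 64 := by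
  have hentry : ∀ i j, (A_CF n)⁻¹ i j ^ 2 ≤ greenKernel (i + 1) (j + 1) ^ 2 := fun i j => by
    rw [A_CF_inv_eq hn, mul_diagonal, greenMatrix, of_apply, mul_pow]
    refine mul_le_of_le_one_right (sq_nonneg _) ?_
    split_ifs <;> norm_num
  have hpoly : (11 * (n : ℝ) ^ 8 + 44 * n ^ 7 + 84 * n ^ 6 + 98 * n ^ 5 + 84 * n ^ 4 + 56 * n ^ 3
      + 31 * n ^ 2 + 12 * n) / 1680 ≤ ((n : ℝ) ^ 8 - (n : ℝ) ^ 4) / 64 := by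
    obtain ⟨m, rfl⟩ : ∃ m, n = m + 5 := ⟨n - 5, by omega⟩
    have hm : (0 : ℝ) ≤ m := m.cast_nonneg
    rw [div_le_div_iff₀ (by norm_num) (by norm_num)]
    push_cast
    nlinarith [pow_nonneg hm 2, pow_nonneg hm 3, pow_nonneg hm 4, pow_nonneg hm 5,
      pow_nonneg hm 6, pow_nonneg hm 7, pow_nonneg hm 8]
  calc ∑ i, ∑ j, (A_CF n)⁻¹ i j ^ 2 ≤ ∑ i : Fin n, ∑ j : Fin n, greenKernel (i + 1) (j + 1) ^ 2 :=
        sum_le_sum fun i _ => sum_le_sum fun j _ => hentry i j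
    _ = ∑ i ∈ range n, ∑ j ∈ range n, greenKernel (i + 1) (j + 1) ^ 2 := by
        simp only [sum_range]
    _ ≤ _ := by rw [sum_range_sum_range_greenKernel_sq]; exact hpoly

/-- The spectral norm of the inverse of the clamped-free beam matrix satisfies
`‖A⁻¹‖₂ ≤ √(n⁸ - n⁴)/8`, and in particular `‖A⁻¹‖₂ ≤ n⁴/8`. -/
theorem A_CF_inv_two_norm_bound (n : ℕ) (hn : 5 ≤ n) :
    opNormP n 2 (A_CF n)⁻¹ ≤ Real.sqrt ((n : ℝ) ^ 8 - (n : ℝ) ^ 4) / 8 ∧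
    opNormP n 2 (A_CF n)⁻¹ ≤ (n : ℝ) ^ 4 / 8 := by
  have hnorm : opNormP n 2 (A_CF n)⁻¹ ≤ √((n : ℝ) ^ 8 - (n : ℝ) ^ 4) / 8 :=
    calc opNormP n 2 (A_CF n)⁻¹ ≤ √(∑ i, ∑ j, (A_CF n)⁻¹ i j ^ 2) := opNormP_two_le_sqrt_sum_sq _
      _ ≤ √(((n : ℝ) ^ 8 - (n : ℝ) ^ 4) / 64) := Real.sqrt_le_sqrt (sum_sq_A_CF_inv_le hn)
      _ = √((n : ℝ) ^ 8 - (n : ℝ) ^ 4) / 8 := by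
        rw [Real.sqrt_div' _ (by norm_num), show (64 : ℝ) = 8 ^ 2 by norm_num,
          Real.sqrt_sq (by norm_num)]
  refine ⟨hnorm, hnorm.trans ?_⟩
  gcongr
  refine Real.sqrt_le_iff.mpr ⟨by positivity, ?_⟩
  rw [← pow_mul]
  exact sub_le_self _ (by positivity)
end

section
/- Let n ≥ 5, let A be the n×n clamped-free beam matrix, and let u ∈ ℝⁿ (entries u₁, …, u_n) satisfy (A u)_i > 0 for every i = 1, …, n. Then for every index j with 1 ≤ j ≤ n−3, the following two inequalities hold: u_{j+2} − u_{j+1} > u_{j+1} − u_j, and 3(u_{j+2} − u_{j+1}) > u_{j+3} − u_j. -/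
/-!
Extend `u` by zero to a sequence `w : ℕ → ℝ`. Row `m + 2` of `A_CF n` applied to `u` is the fourth
forward difference `Δ⁴w m` whenever it is an interior row, the penultimate row is
`-Δ³w (n-4) - Δ²w (n-3)` and the last row is `2 Δ²w (n-3)`. So `Δ²w (n-3) > 0` and `Δ³w (n-4) < 0`;
since `Δ⁴w ≥ 0`, the sequence `Δ³w` increases and is therefore negative on `[0, n-4]`, so `Δ²w`
decreases and is positive on `[0, n-3]`. The two claims are `Δ²w (j-1) > 0` and `Δ³w (j-1) < 0`.
-/

open scoped ENNReal

open Finset Matrix fwdDiff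

theorem fwdDiff_iter_succ_apply {M G : Type*} [AddCommMonoid M] [AddCommGroup G] (h : M)
    (f : M → G) (k : ℕ) (y : M) :
    Δ_[h] ^[k + 1] f y = Δ_[h] ^[k] f (y + h) - Δ_[h] ^[k] f y := by
  rw [Function.iterate_succ_apply']
  rfl

section OrderedGroup

variable {α : Type*} [AddCommGroup α] [PartialOrder α] [IsOrderedAddMonoid α] {f : ℕ → α} {N : ℕ}

theorem monotoneOn_Iic_of_fwdDiff_nonneg (hf : ∀ m < N, 0 ≤ Δ_[1] f m) :
    MonotoneOn f (Set.Iic N) :=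
  monotoneOn_of_le_succ Set.ordConnected_Iic fun m _ _ hm =>
    sub_nonneg.mp (hf m (Order.succ_le_iff.mp hm))

theorem antitoneOn_Iic_of_fwdDiff_nonpos (hf : ∀ m < N, Δ_[1] f m ≤ 0) :
    AntitoneOn f (Set.Iic N) :=
  antitoneOn_of_succ_le Set.ordConnected_Iic fun m _ _ hm =>
    sub_nonpos.mp (hf m (Order.succ_le_iff.mp hm))

end OrderedGroup

def extendByZero {α : Type*} [Zero α] {n : ℕ} (u : Fin n → α) (k : ℕ) : α :=
  if h : k < n then u ⟨k, h⟩ else 0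

theorem extendByZero_of_lt {α : Type*} [Zero α] {n : ℕ} (u : Fin n → α) {k : ℕ} (h : k < n) :
    extendByZero u k = u ⟨k, h⟩ :=
  dif_pos h

theorem sum_range_ite_eq_of_lt {M : Type*} [AddCommMonoid M] {n p : ℕ} (hp : p < n)
    (f : ℕ → M) :
    ∑ k ∈ range n, (if k = p then f k else 0) = f p := by
  rw [sum_ite_eq', if_pos (mem_range.mpr hp)]

theorem mulVec_apply_eq_sum_range {R ι : Type*} [NonUnitalNonAssocSemiring R] [Fintype ι] {n : ℕ}
    (M : Matrix ι (Fin n) R) (u : Fin n → R) (i : ι) (g : ℕ → R)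
    (hg : ∀ k : Fin n, M i k * extendByZero u k = g k) :
    (M *ᵥ u) i = ∑ k ∈ range n, g k := by
  rw [mulVec, dotProduct, ← Fin.sum_univ_eq_sum_range]
  exact sum_congr rfl fun k _ => extendByZero_of_lt u k.isLt ▸ hg k

theorem A_CF_mulVec_apply_interior {n m : ℕ} (hm : m + 5 ≤ n) (u : Fin n → ℝ) :
    (A_CF n *ᵥ u) ⟨m + 2, by omega⟩ = Δ_[1] ^[4] (extendByZero u) m := by
  set w := extendByZero u
  rw [mulVec_apply_eq_sum_range _ _ _ (fun k => (if k = m then w k else 0)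
      + (if k = m + 1 then -4 * w k else 0) + (if k = m + 2 then 6 * w k else 0)
      + (if k = m + 3 then -4 * w k else 0) + (if k = m + 4 then w k else 0))]
  · simp (disch := omega) only [sum_add_distrib, sum_range_ite_eq_of_lt]
    simp only [fwdDiff_iter_succ_apply, Function.iterate_zero_apply, add_assoc, Nat.reduceAdd]
    ring
  · intro k
    simp only [A_CF, of_apply]
    split_ifs <;> first | ring1 | (exfalso; omega)

theorem A_CF_mulVec_apply_penultimate {N : ℕ} (u : Fin (N + 4) → ℝ) :
    (A_CF (N + 4) *ᵥ u) ⟨N + 2, by omega⟩ =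
      -Δ_[1] ^[3] (extendByZero u) N - Δ_[1] ^[2] (extendByZero u) (N + 1) := by
  set w := extendByZero u
  rw [mulVec_apply_eq_sum_range _ _ _ (fun k => (if k = N then w k else 0)
      + (if k = N + 1 then -4 * w k else 0) + (if k = N + 2 then 5 * w k else 0)
      + (if k = N + 3 then -2 * w k else 0))]
  · simp (disch := omega) only [sum_add_distrib, sum_range_ite_eq_of_lt]
    simp only [fwdDiff_iter_succ_apply, Function.iterate_zero_apply, add_assoc, Nat.reduceAdd]
    ring
  · intro k
    simp only [A_CF, of_apply]
    split_ifs <;> first | ring1 | (exfalso; omega)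

theorem A_CF_mulVec_apply_last {N : ℕ} (u : Fin (N + 4) → ℝ) :
    (A_CF (N + 4) *ᵥ u) ⟨N + 3, by omega⟩ = 2 * Δ_[1] ^[2] (extendByZero u) (N + 1) := by
  set w := extendByZero u
  rw [mulVec_apply_eq_sum_range _ _ _ (fun k => (if k = N + 1 then 2 * w k else 0)
      + (if k = N + 2 then -4 * w k else 0) + (if k = N + 3 then 2 * w k else 0))]
  · simp (disch := omega) only [sum_add_distrib, sum_range_ite_eq_of_lt]
    simp only [fwdDiff_iter_succ_apply, Function.iterate_zero_apply, add_assoc, Nat.reduceAdd]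
    ring
  · intro k
    simp only [A_CF, of_apply]
    split_ifs <;> first | ring1 | (exfalso; omega)

/-- If `A u > 0` componentwise for the clamped-free beam matrix `A`, then for
every `1 ≤ j ≤ n - 3` (1-based indices; `u_j` is `u ⟨j-1,_⟩`):
`u_{j+2} - u_{j+1} > u_{j+1} - u_j` and `3(u_{j+2} - u_{j+1}) > u_{j+3} - u_j`. -/
theorem A_CF_mulVec_pos_differences (n : ℕ) (u : Fin n → ℝ)
    (hu : ∀ i : Fin n, 0 < (A_CF n).mulVec u i) :
    ∀ j : ℕ, ∀ _hj1 : 1 ≤ j, ∀ _hj2 : j ≤ n - 3,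
      (u ⟨j, by omega⟩ - u ⟨j - 1, by omega⟩ <
        u ⟨j + 1, by omega⟩ - u ⟨j, by omega⟩) ∧
      (u ⟨j + 2, by omega⟩ - u ⟨j - 1, by omega⟩ <
        3 * (u ⟨j + 1, by omega⟩ - u ⟨j, by omega⟩)) := by
  intro j hj1 hj2
  obtain ⟨N, rfl⟩ : ∃ N, n = N + 4 := ⟨n - 4, by omega⟩
  obtain ⟨k, rfl⟩ : ∃ k, j = k + 1 := ⟨j - 1, by omega⟩
  set w := extendByZero u
  have hΔ4 : ∀ m < N, 0 ≤ Δ_[1] (Δ_[1] ^[3] w) m := fun m hm => by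
    rw [← Function.iterate_succ_apply' (Δ_[1]), ← A_CF_mulVec_apply_interior (by omega)]
    exact (hu _).le
  have hΔ2_last : 0 < Δ_[1] ^[2] w (N + 1) := by
    linarith [A_CF_mulVec_apply_last u ▸ hu ⟨N + 3, by omega⟩]
  have hΔ3_last : Δ_[1] ^[3] w N < 0 := by
    linarith [A_CF_mulVec_apply_penultimate u ▸ hu ⟨N + 2, by omega⟩]
  have hΔ3 : ∀ m ≤ N, Δ_[1] ^[3] w m < 0 := fun m hm =>
    (monotoneOn_Iic_of_fwdDiff_nonneg hΔ4 hm Set.self_mem_Iic hm).trans_lt hΔ3_last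
  have hΔ2_anti : AntitoneOn (Δ_[1] ^[2] w) (Set.Iic (N + 1)) :=
    antitoneOn_Iic_of_fwdDiff_nonpos fun m hm => by
      rw [← Function.iterate_succ_apply' (Δ_[1])]
      exact (hΔ3 m (by omega)).le
  have hΔ2 : ∀ m ≤ N + 1, 0 < Δ_[1] ^[2] w m := fun m hm =>
    hΔ2_last.trans_le (hΔ2_anti hm Set.self_mem_Iic hm)
  have h2 := hΔ2 k (by omega)
  have h3 := hΔ3 k (by omega)
  simp only [fwdDiff_iter_succ_apply, Function.iterate_zero_apply, add_assoc, Nat.reduceAdd] at h2 h3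
  simp only [← extendByZero_of_lt u, Nat.add_sub_cancel, add_assoc, Nat.reduceAdd]
  constructor <;> linarith
end
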